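/- arXiv:1401.0154 — 2 statements merged into one kernel-verified Lean document; each statement's English description precedes it below -/
import Mathlib

section
/- Let G=(V,D) be a finite connected symmetric digraph with weight w and 1-form θ, with twisted Szegedy walk U = SC and discriminant T = d_A d_B*. Set L := ran(d_A*) + ran(d_B*), |E| := |D|/2, m₁ := dim ker(T − I), m₋₁ := dim ker(T + I). Then { ψ ∈ ℓ²(D) : Uψ = ψ and ψ ⟂ L } = ker(d_A) ∩ ker(S + I), and this space has dimension max(0, |E| − |V| + m₁); likewise { ψ ∈ ℓ²(D) : Uψ = −ψ and ψ ⟂ L } = ker(d_A) ∩ ker(S − I), of dimension max(0, |E| − |V| + m₋₁). -/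
open Finset

/-- A finite symmetric digraph: finite nonempty vertex and arc sets, origin/terminus maps,
and a fixed-point-free involutive arc reversal with `o (rev e) = t e`; every vertex has
out-degree at least one. -/
structure SymDigraph where
  V : Type
  D : Type
  [fintypeV : Fintype V]
  [fintypeD : Fintype D]
  [decEqV : DecidableEq V]
  [decEqD : DecidableEq D]
  [nonemptyV : Nonempty V]
  o : D → V
  t : D → V
  rev : D → D
  rev_ne : ∀ e, rev e ≠ e
  rev_rev : ∀ e, rev (rev e) = e
  o_rev : ∀ e, o (rev e) = t e
  exists_arc : ∀ u : V, ∃ e : D, o e = u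

attribute [instance] SymDigraph.fintypeV SymDigraph.fintypeD SymDigraph.decEqV
  SymDigraph.decEqD SymDigraph.nonemptyV

namespace SymDigraph

variable (G : SymDigraph)

/-- out-degree of a vertex -/
def deg (u : G.V) : ℕ := (univ.filter fun e => G.o e = u).card

/-- a weight: never zero and with unit square-sum over the arcs leaving each vertex -/
def IsWeight (w : G.D → ℂ) : Prop :=
  (∀ e, w e ≠ 0) ∧
    ∀ u : G.V, ∑ e ∈ univ.filter (fun e => G.o e = u), ‖w e‖ ^ 2 = 1

/-- a 1-form: antisymmetric under arc reversal -/
def IsOneForm (θ : G.D → ℝ) : Prop := ∀ e, θ (G.rev e) = - θ e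

/-- the boundary operator `d_A : ℓ²(D) → ℓ²(V)`, `(d_A φ)(v) = ∑_{e : o e = v} conj (w e) * φ e` -/
noncomputable def dA (w : G.D → ℂ) : (G.D → ℂ) →ₗ[ℂ] (G.V → ℂ) where
  toFun φ := fun v => ∑ e ∈ univ.filter (fun e => G.o e = v), (starRingEnd ℂ) (w e) * φ e
  map_add' φ ψ := by
    funext v
    simp [mul_add, Finset.sum_add_distrib]
  map_smul' c φ := by
    funext v
    simp only [Pi.smul_apply, smul_eq_mul, RingHom.id_apply, Finset.mul_sum]
    exact Finset.sum_congr rfl fun e _ => by ring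

/-- the boundary operator `d_B`, `(d_B φ)(v) = ∑_{e : o e = v} conj (w e) e^{-iθ(e)} φ(ē)` -/
noncomputable def dB (w : G.D → ℂ) (θ : G.D → ℝ) : (G.D → ℂ) →ₗ[ℂ] (G.V → ℂ) where
  toFun φ := fun v => ∑ e ∈ univ.filter (fun e => G.o e = v),
      (starRingEnd ℂ) (w e) * Complex.exp (-(θ e : ℂ) * Complex.I) * φ (G.rev e)
  map_add' φ ψ := by
    funext v
    simp [mul_add, Finset.sum_add_distrib]
  map_smul' c φ := by
    funext v
    simp only [Pi.smul_apply, smul_eq_mul, RingHom.id_apply, Finset.mul_sum]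
    exact Finset.sum_congr rfl fun e _ => by ring

/-- the coboundary operator `d_A* : ℓ²(V) → ℓ²(D)`, `(d_A* f)(e) = w e * f (o e)` -/
noncomputable def dAadj (w : G.D → ℂ) : (G.V → ℂ) →ₗ[ℂ] (G.D → ℂ) where
  toFun f := fun e => w e * f (G.o e)
  map_add' f g := by funext e; simp [mul_add]
  map_smul' c f := by funext e; simp only [Pi.smul_apply, smul_eq_mul, RingHom.id_apply]; ring

/-- the coboundary operator `d_B*`, `(d_B* f)(e) = e^{-iθ(e)} w(ē) f (t e)` -/
noncomputable def dBadj (w : G.D → ℂ) (θ : G.D → ℝ) : (G.V → ℂ) →ₗ[ℂ] (G.D → ℂ) where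
  toFun f := fun e => Complex.exp (-(θ e : ℂ) * Complex.I) * w (G.rev e) * f (G.t e)
  map_add' f g := by funext e; simp [mul_add]
  map_smul' c f := by funext e; simp only [Pi.smul_apply, smul_eq_mul, RingHom.id_apply]; ring

/-- the twisted shift `S`, `(Sφ)(e) = e^{-iθ(e)} φ(ē)` -/
noncomputable def shiftS (θ : G.D → ℝ) : (G.D → ℂ) →ₗ[ℂ] (G.D → ℂ) where
  toFun φ := fun e => Complex.exp (-(θ e : ℂ) * Complex.I) * φ (G.rev e)
  map_add' φ ψ := by funext e; simp [mul_add]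
  map_smul' c φ := by funext e; simp only [Pi.smul_apply, smul_eq_mul, RingHom.id_apply]; ring

/-- the coin operator `C = 2 d_A* d_A - I` -/
noncomputable def coinC (w : G.D → ℂ) : (G.D → ℂ) →ₗ[ℂ] (G.D → ℂ) :=
  (2 : ℂ) • (G.dAadj w ∘ₗ G.dA w) - LinearMap.id

/-- the twisted Szegedy walk `U = S C` -/
noncomputable def walkU (w : G.D → ℂ) (θ : G.D → ℝ) : (G.D → ℂ) →ₗ[ℂ] (G.D → ℂ) :=
  G.shiftS θ ∘ₗ G.coinC w

/-- the discriminant operator `T = d_A d_B*` -/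
noncomputable def discT (w : G.D → ℂ) (θ : G.D → ℝ) : (G.V → ℂ) →ₗ[ℂ] (G.V → ℂ) :=
  G.dA w ∘ₗ G.dBadj w θ

/-- the standard Hermitian inner product on `ℓ²(D)` -/
noncomputable def innD (φ ψ : G.D → ℂ) : ℂ := ∑ e, (starRingEnd ℂ) (φ e) * ψ e

/-- the standard Hermitian inner product on `ℓ²(V)` -/
noncomputable def innV (f g : G.V → ℂ) : ℂ := ∑ v, (starRingEnd ℂ) (f v) * g v

end SymDigraph

/-- `G` is connected: any two vertices are joined by a (possibly empty) path of arcs. -/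
def SymDigraph.Connected (G : SymDigraph) : Prop :=
  ∀ u v : G.V, Relation.ReflTransGen (fun a b => ∃ e : G.D, G.o e = a ∧ G.t e = b) u v

/-!
If `d_A ψ = 0` the coin acts as `-1`, so `Uψ = -Sψ`; and since `d_B = d_A S`, orthogonality to
`ran d_A* + ran d_B*` says exactly `d_A ψ = d_B ψ = 0`. Hence the eigenvectors of `U` for
`σ = ±1` orthogonal to `L` form `ker d_A ∩ W` with `W = ker (S + σ)`.

`S` is a unitary involution, and multiplying by an orientation of the edges anticommutes with it,
so both of its eigenspaces have dimension `|E|`. Moreover `W = ran (1 - σS)`, where `1 - σS` is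
self-adjoint with square `2 (1 - σS)`. So `d_A W = ran (d_A (1 - σS))`, which has the rank of
`d_A (1 - σS)² d_A* = -2σ (T - σ)`, i.e. `|V| - m_σ`; rank-nullity on `W` gives
`dim (ker d_A ∩ W) = |E| - |V| + m_σ`.
-/

open LinearMap (ker range mem_ker mem_range_self comp_apply)
open scoped ComplexOrder

section Adjoint

variable {ι κ : Type*} [Fintype ι] [Fintype κ]
  {A : (ι → ℂ) →ₗ[ℂ] (κ → ℂ)} {B : (κ → ℂ) →ₗ[ℂ] (ι → ℂ)}

theorem apply_eq_zero_of_forall_range_dotProduct_eq_zero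
    (hAB : ∀ f ψ, star (B f) ⬝ᵥ ψ = star f ⬝ᵥ A ψ) {ψ : ι → ℂ}
    (h : ∀ χ ∈ range B, star χ ⬝ᵥ ψ = 0) : A ψ = 0 := by
  rw [← dotProduct_star_self_eq_zero, ← hAB]
  exact h _ (mem_range_self B _)

theorem finrank_range_comp_of_adjoint (hAB : ∀ f ψ, star (B f) ⬝ᵥ ψ = star f ⬝ᵥ A ψ) :
    Module.finrank ℂ (range (A ∘ₗ B)) = Module.finrank ℂ (range A) := by
  have hker : ker (A ∘ₗ B) = ker B := by
    refine le_antisymm (fun f hf => ?_) (LinearMap.ker_le_ker_comp B A)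
    rw [mem_ker, ← dotProduct_star_self_eq_zero, hAB, ← comp_apply, mem_ker.1 hf,
      dotProduct_zero]
  have hdisj : Disjoint (range A) (ker B) := by
    refine Submodule.disjoint_def.2 fun _ ⟨ψ, hψ⟩ hB => ?_
    rw [← hψ, ← dotProduct_star_self_eq_zero, ← hAB, mem_ker.1 (hψ ▸ hB), star_zero,
      zero_dotProduct]
  have hle := Submodule.finrank_add_finrank_le_of_disjoint hdisj
  have hcomp := Submodule.finrank_mono (LinearMap.range_comp_le_range B A)
  have hnull := LinearMap.finrank_range_add_finrank_ker (A ∘ₗ B)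
  rw [hker] at hnull
  omega

end Adjoint

theorem finrank_map_add_finrank_ker_inf {K V V₂ : Type*} [Field K] [AddCommGroup V]
    [Module K V] [AddCommGroup V₂] [Module K V₂] [FiniteDimensional K V] (f : V →ₗ[K] V₂)
    (W : Submodule K V) :
    Module.finrank K (W.map f) + Module.finrank K ↥(ker f ⊓ W) = Module.finrank K W := by
  rw [← LinearMap.range_domRestrict, ← LinearMap.finrank_range_add_finrank_ker (f.domRestrict W),
    LinearMap.ker_domRestrict, ← Submodule.finrank_map_subtype_eq W, Submodule.map_comap_subtype,
    inf_comm]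

section Involution

variable {K V : Type*} [Field K] [AddCommGroup V] [Module K V] {S : V →ₗ[K] V} {σ : K}

theorem mem_ker_add_smul_id {x : V} : x ∈ ker (S + σ • LinearMap.id) ↔ S x = -(σ • x) := by
  rw [mem_ker, LinearMap.add_apply, LinearMap.smul_apply, LinearMap.id_apply,
    add_eq_zero_iff_eq_neg]

theorem sub_smul_apply_mem_ker_add_smul_id (hS : ∀ x, S (S x) = x) (hσ : σ * σ = 1) (x : V) :
    x - σ • S x ∈ ker (S + σ • LinearMap.id) := by
  rw [mem_ker_add_smul_id, map_sub, map_smul, hS, smul_sub, smul_smul, hσ, one_smul, neg_sub]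

theorem id_sub_smul_comp_self (hS : ∀ x, S (S x) = x) (hσ : σ * σ = 1) :
    (LinearMap.id - σ • S) ∘ₗ (LinearMap.id - σ • S) = (2 : K) • (LinearMap.id - σ • S) := by
  ext x
  simp only [comp_apply, LinearMap.sub_apply, LinearMap.smul_apply, LinearMap.id_apply, map_sub,
    map_smul, hS]
  linear_combination (norm := module) hσ • x

theorem apply_mem_ker_add_neg_smul_id_of_anticomm (J : V →ₗ[K] V) (hJ : ∀ x, S (J x) = -J (S x))
    {x : V} (hx : x ∈ ker (S + σ • LinearMap.id)) : J x ∈ ker (S + (-σ) • LinearMap.id) := by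
  rw [mem_ker_add_smul_id] at hx ⊢
  rw [hJ, hx, map_neg, map_smul, neg_smul]

theorem map_ker_add_smul_id_of_anticomm (J : V ≃ₗ[K] V) (hJ : ∀ x, S (J x) = -J (S x)) :
    (ker (S + σ • LinearMap.id)).map (J : V →ₗ[K] V) = ker (S + (-σ) • LinearMap.id) := by
  have hJsymm : ∀ x, S (J.symm x) = -J.symm (S x) := fun x => by
    have hJS : J (S (J.symm x)) = -S x := by
      rw [← neg_neg (J (S (J.symm x))), ← hJ, J.apply_symm_apply]
    exact J.injective (by rw [hJS, map_neg, J.apply_symm_apply])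
  refine le_antisymm ?_ fun x hx => ⟨J.symm x, ?_, J.apply_symm_apply x⟩
  · rintro _ ⟨x, hx, rfl⟩
    exact apply_mem_ker_add_neg_smul_id_of_anticomm (J : V →ₗ[K] V) hJ hx
  · simpa only [neg_neg, SetLike.mem_coe, LinearEquiv.coe_coe] using
      apply_mem_ker_add_neg_smul_id_of_anticomm J.symm.toLinearMap hJsymm hx

variable [CharZero K]

theorem range_id_sub_smul_eq_ker (hS : ∀ x, S (S x) = x) (hσ : σ * σ = 1) :
    range (LinearMap.id - σ • S) = ker (S + σ • LinearMap.id) := by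
  refine le_antisymm ?_ fun x hx => ⟨(2 : K)⁻¹ • x, ?_⟩
  · rintro _ ⟨x, rfl⟩
    exact sub_smul_apply_mem_ker_add_smul_id hS hσ x
  · rw [mem_ker_add_smul_id] at hx
    rw [LinearMap.sub_apply, LinearMap.smul_apply, LinearMap.id_apply, map_smul, hx]
    linear_combination (norm := module) (2⁻¹ : K) • hσ • x

theorem isCompl_ker_add_smul_id (hS : ∀ x, S (S x) = x) (hσ : σ * σ = 1) :
    IsCompl (ker (S + σ • LinearMap.id)) (ker (S + (-σ) • LinearMap.id)) := by
  have hσ0 : σ ≠ 0 := left_ne_zero_of_mul_eq_one hσ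
  constructor
  · refine Submodule.disjoint_def.2 fun x h₁ h₂ => ?_
    rw [mem_ker_add_smul_id] at h₁ h₂
    have : (2 * σ) • x = 0 := by linear_combination (norm := module) h₂.symm.trans h₁
    exact (smul_eq_zero.1 this).resolve_left (mul_ne_zero two_ne_zero hσ0)
  · refine codisjoint_iff.2 (eq_top_iff.2 fun x _ => Submodule.mem_sup.2 ?_)
    have hσ' : -σ * -σ = 1 := by rw [neg_mul_neg, hσ]
    refine ⟨(2 : K)⁻¹ • (x - σ • S x), Submodule.smul_mem _ _
      (sub_smul_apply_mem_ker_add_smul_id hS hσ x), (2 : K)⁻¹ • (x - (-σ) • S x),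
      Submodule.smul_mem _ _ (sub_smul_apply_mem_ker_add_smul_id hS hσ' x), by module⟩

theorem two_mul_finrank_ker_add_smul_id [FiniteDimensional K V] (hS : ∀ x, S (S x) = x)
    (hσ : σ * σ = 1) (J : V ≃ₗ[K] V) (hJ : ∀ x, S (J x) = -J (S x)) :
    2 * Module.finrank K (ker (S + σ • LinearMap.id)) = Module.finrank K V := by
  rw [← Submodule.finrank_add_eq_of_isCompl (isCompl_ker_add_smul_id hS hσ),
    ← map_ker_add_smul_id_of_anticomm J hJ, LinearEquiv.finrank_map_eq, two_mul]

end Involution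

namespace SymDigraph

variable (G : SymDigraph) {w : G.D → ℂ} {θ : G.D → ℝ}

theorem innD_eq_dotProduct (φ ψ : G.D → ℂ) : G.innD φ ψ = star φ ⬝ᵥ ψ := rfl

theorem dAadj_adjoint (w : G.D → ℂ) (f : G.V → ℂ) (ψ : G.D → ℂ) :
    star (G.dAadj w f) ⬝ᵥ ψ = star f ⬝ᵥ G.dA w ψ := by
  simp only [dotProduct, Pi.star_apply, dAadj, dA, LinearMap.coe_mk, AddHom.coe_mk, Finset.mul_sum]
  rw [← Finset.sum_fiberwise univ G.o]
  refine Finset.sum_congr rfl fun v _ => Finset.sum_congr rfl fun e he => ?_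
  rw [(Finset.mem_filter.1 he).2, star_mul', starRingEnd_apply]
  ring

theorem shiftS_adjoint (hθ : G.IsOneForm θ) (φ ψ : G.D → ℂ) :
    star (G.shiftS θ φ) ⬝ᵥ ψ = star φ ⬝ᵥ G.shiftS θ ψ := by
  simp only [dotProduct, Pi.star_apply, shiftS, LinearMap.coe_mk, AddHom.coe_mk]
  refine Fintype.sum_bijective G.rev (Function.Involutive.bijective G.rev_rev) _ _ fun e => ?_
  simp only [G.rev_rev, hθ e, star_mul', Complex.star_def, ← Complex.exp_conj, map_mul, map_neg,
    Complex.conj_ofReal, Complex.conj_I, Complex.ofReal_neg]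
  ring_nf

theorem shiftS_shiftS (hθ : G.IsOneForm θ) (φ : G.D → ℂ) : G.shiftS θ (G.shiftS θ φ) = φ := by
  funext e
  simp only [shiftS, LinearMap.coe_mk, AddHom.coe_mk, G.rev_rev, hθ e, ← mul_assoc,
    ← Complex.exp_add]
  simp

theorem dB_eq_dA_comp_shiftS (w : G.D → ℂ) (θ : G.D → ℝ) :
    G.dB w θ = G.dA w ∘ₗ G.shiftS θ := by
  ext φ v
  simp only [dB, dA, shiftS, LinearMap.coe_mk, AddHom.coe_mk, LinearMap.comp_apply, mul_assoc]

theorem dBadj_eq_shiftS_comp_dAadj (w : G.D → ℂ) (θ : G.D → ℝ) :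
    G.dBadj w θ = G.shiftS θ ∘ₗ G.dAadj w := by
  ext f e
  simp only [dBadj, dAadj, shiftS, LinearMap.coe_mk, AddHom.coe_mk, LinearMap.comp_apply,
    G.o_rev, mul_assoc]

theorem dBadj_adjoint (hθ : G.IsOneForm θ) (f : G.V → ℂ) (ψ : G.D → ℂ) :
    star (G.dBadj w θ f) ⬝ᵥ ψ = star f ⬝ᵥ G.dB w θ ψ := by
  rw [dBadj_eq_shiftS_comp_dAadj, LinearMap.comp_apply, G.shiftS_adjoint hθ, dAadj_adjoint,
    dB_eq_dA_comp_shiftS, LinearMap.comp_apply]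

theorem dA_dAadj (hw : G.IsWeight w) (f : G.V → ℂ) : G.dA w (G.dAadj w f) = f := by
  funext v
  have hnorm : ∀ e ∈ univ.filter (fun e => G.o e = v),
      starRingEnd ℂ (w e) * (w e * f (G.o e)) = ((‖w e‖ ^ 2 : ℝ) : ℂ) * f v := by
    intro e he
    rw [(Finset.mem_filter.1 he).2, ← mul_assoc, ← Complex.normSq_eq_conj_mul_self,
      Complex.normSq_eq_norm_sq]
  simp only [dA, dAadj, LinearMap.coe_mk, AddHom.coe_mk]
  rw [Finset.sum_congr rfl hnorm, ← Finset.sum_mul, ← Complex.ofReal_sum, hw.2 v,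
    Complex.ofReal_one, one_mul]

theorem discT_eq (w : G.D → ℂ) (θ : G.D → ℝ) :
    G.discT w θ = G.dA w ∘ₗ G.shiftS θ ∘ₗ G.dAadj w := by
  rw [discT, dBadj_eq_shiftS_comp_dAadj]

theorem walkU_apply_of_dA_eq_zero {ψ : G.D → ℂ} (hA : G.dA w ψ = 0) :
    G.walkU w θ ψ = -G.shiftS θ ψ := by
  rw [walkU, coinC, LinearMap.comp_apply, LinearMap.sub_apply, LinearMap.smul_apply,
    LinearMap.comp_apply, hA, map_zero, smul_zero, LinearMap.id_apply, zero_sub, map_neg]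

/-- `±1` according to a chosen orientation of the edge `{e, ē}`. -/
noncomputable def orientation : G.D → ℂ := fun e =>
  if Fintype.equivFin G.D e < Fintype.equivFin G.D (G.rev e) then 1 else -1

theorem orientation_rev (e : G.D) : G.orientation (G.rev e) = -G.orientation e := by
  have hne : Fintype.equivFin G.D (G.rev e) ≠ Fintype.equivFin G.D e :=
    (Fintype.equivFin G.D).injective.ne (G.rev_ne e)
  unfold orientation
  rw [G.rev_rev]
  rcases hne.lt_or_gt with h | h <;> simp [h, lt_asymm h]

theorem orientation_mul_self : G.orientation * G.orientation = 1 := by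
  funext e
  simp only [orientation, Pi.mul_apply, Pi.one_apply]
  split_ifs <;> norm_num

noncomputable def orientationEquiv : (G.D → ℂ) ≃ₗ[ℂ] (G.D → ℂ) :=
  LinearEquiv.ofInvolutive (LinearMap.mulLeft ℂ G.orientation) fun φ => by
    rw [LinearMap.mulLeft_apply, LinearMap.mulLeft_apply, ← mul_assoc, orientation_mul_self,
      one_mul]

theorem orientationEquiv_apply (φ : G.D → ℂ) : G.orientationEquiv φ = G.orientation * φ := rfl

theorem shiftS_orientationEquiv (φ : G.D → ℂ) :
    G.shiftS θ (G.orientationEquiv φ) = -G.orientationEquiv (G.shiftS θ φ) := by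
  funext e
  simp only [orientationEquiv_apply, shiftS, LinearMap.coe_mk, AddHom.coe_mk, Pi.mul_apply,
    Pi.neg_apply, orientation_rev]
  ring

theorem two_mul_finrank_ker_shiftS_add_smul_id (hθ : G.IsOneForm θ) {σ : ℂ} (hσ : σ * σ = 1) :
    2 * Module.finrank ℂ (ker (G.shiftS θ + σ • LinearMap.id)) = Fintype.card G.D := by
  rw [two_mul_finrank_ker_add_smul_id (G.shiftS_shiftS hθ) hσ G.orientationEquiv
    G.shiftS_orientationEquiv, Module.finrank_fintype_fun_eq_card]

theorem forall_innD_eq_zero_iff (hθ : G.IsOneForm θ) {ψ : G.D → ℂ} :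
    (∀ χ ∈ range (G.dAadj w) ⊔ range (G.dBadj w θ), G.innD χ ψ = 0) ↔
      G.dA w ψ = 0 ∧ G.dB w θ ψ = 0 := by
  refine ⟨fun h => ⟨?_, ?_⟩, ?_⟩
  · exact apply_eq_zero_of_forall_range_dotProduct_eq_zero (G.dAadj_adjoint w)
      fun χ hχ => h χ (Submodule.mem_sup_left hχ)
  · exact apply_eq_zero_of_forall_range_dotProduct_eq_zero (G.dBadj_adjoint hθ)
      fun χ hχ => h χ (Submodule.mem_sup_right hχ)
  · rintro ⟨hA, hB⟩ χ hχ
    obtain ⟨_, ⟨f, rfl⟩, _, ⟨g, rfl⟩, rfl⟩ := Submodule.mem_sup.1 hχ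
    rw [innD_eq_dotProduct, star_add, add_dotProduct, dAadj_adjoint, G.dBadj_adjoint hθ, hA, hB,
      dotProduct_zero, dotProduct_zero, add_zero]

theorem setOf_walkU_eq_smul_and_perp (hθ : G.IsOneForm θ) (σ : ℂ) :
    {ψ : G.D → ℂ | G.walkU w θ ψ = σ • ψ ∧
        ∀ χ ∈ range (G.dAadj w) ⊔ range (G.dBadj w θ), G.innD χ ψ = 0}
      = ↑(ker (G.dA w) ⊓ ker (G.shiftS θ + σ • LinearMap.id)) := by
  ext ψ
  rw [Set.mem_ofPred_eq, SetLike.mem_coe, Submodule.mem_inf, mem_ker_add_smul_id, mem_ker,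
    G.forall_innD_eq_zero_iff hθ]
  constructor
  · rintro ⟨hU, hA, -⟩
    rw [G.walkU_apply_of_dA_eq_zero hA] at hU
    exact ⟨hA, neg_eq_iff_eq_neg.1 hU⟩
  · rintro ⟨hA, hS⟩
    refine ⟨by rw [G.walkU_apply_of_dA_eq_zero hA, hS, neg_neg], hA, ?_⟩
    rw [dB_eq_dA_comp_shiftS, LinearMap.comp_apply, hS, map_neg, map_smul, hA, smul_zero, neg_zero]

theorem finrank_ker_dA_inf_add_card (hw : G.IsWeight w) (hθ : G.IsOneForm θ) {σ : ℂ}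
    (hσ : σ * σ = 1) :
    Module.finrank ℂ ↥(ker (G.dA w) ⊓ ker (G.shiftS θ + σ • LinearMap.id)) + Fintype.card G.V
      = Module.finrank ℂ (ker (G.shiftS θ + σ • LinearMap.id))
        + Module.finrank ℂ (ker (G.discT w θ - σ • LinearMap.id)) := by
  have hσ_real : star σ = σ := by rcases mul_self_eq_one_iff.1 hσ with h | h <;> simp [h]
  set π := LinearMap.id - σ • G.shiftS θ
  have hπ : ∀ φ ψ, star (π φ) ⬝ᵥ ψ = star φ ⬝ᵥ π ψ := fun φ ψ => by
    simp only [π, LinearMap.sub_apply, LinearMap.smul_apply, LinearMap.id_apply, star_sub,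
      star_smul, hσ_real, sub_dotProduct, dotProduct_sub, smul_dotProduct, dotProduct_smul,
      G.shiftS_adjoint hθ]
  have hadj : ∀ f ψ, star ((π ∘ₗ G.dAadj w) f) ⬝ᵥ ψ = star f ⬝ᵥ (G.dA w ∘ₗ π) ψ := fun f ψ => by
    rw [comp_apply, hπ, dAadj_adjoint, comp_apply]
  have hcomp : (G.dA w ∘ₗ π) ∘ₗ (π ∘ₗ G.dAadj w)
      = (-2 * σ) • (G.discT w θ - σ • LinearMap.id) := by
    rw [LinearMap.comp_assoc, ← LinearMap.comp_assoc (G.dAadj w),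
      id_sub_smul_comp_self (G.shiftS_shiftS hθ) hσ, discT_eq]
    refine LinearMap.ext fun f => ?_
    rw [comp_apply, comp_apply, LinearMap.smul_apply, LinearMap.smul_apply, LinearMap.sub_apply,
      LinearMap.sub_apply]
    simp only [comp_apply, LinearMap.smul_apply, LinearMap.id_apply, map_smul, map_sub,
      G.dA_dAadj hw]
    linear_combination (norm := module) (-2 : ℂ) • hσ • f
  have hrange : (ker (G.shiftS θ + σ • LinearMap.id)).map (G.dA w) = range (G.dA w ∘ₗ π) := by
    rw [← range_id_sub_smul_eq_ker (G.shiftS_shiftS hθ) hσ, LinearMap.range_comp]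
  have hrank := finrank_range_comp_of_adjoint hadj
  rw [hcomp, LinearMap.range_smul _ _ (mul_ne_zero (by norm_num) (left_ne_zero_of_mul_eq_one hσ)),
    ← hrange] at hrank
  have hW := finrank_map_add_finrank_ker_inf (G.dA w) (ker (G.shiftS θ + σ • LinearMap.id))
  have hT := LinearMap.finrank_range_add_finrank_ker (G.discT w θ - σ • LinearMap.id)
  rw [Module.finrank_fintype_fun_eq_card] at hT
  omega

theorem finrank_ker_dA_inf_eq (hw : G.IsWeight w) (hθ : G.IsOneForm θ) {σ : ℂ}
    (hσ : σ * σ = 1) :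
    (Module.finrank ℂ ↥(ker (G.dA w) ⊓ ker (G.shiftS θ + σ • LinearMap.id)) : ℤ)
      = max 0 ((Fintype.card G.D : ℤ) / 2 - (Fintype.card G.V : ℤ)
          + (Module.finrank ℂ ↥(ker (G.discT w θ - σ • LinearMap.id)) : ℤ)) := by
  have hsum := G.finrank_ker_dA_inf_add_card hw hθ hσ
  have hhalf := G.two_mul_finrank_ker_shiftS_add_smul_id hθ hσ
  omega

end SymDigraph

theorem birth_eigenspaces_general (G : SymDigraph) (w : G.D → ℂ) (θ : G.D → ℝ)
    (hw : G.IsWeight w) (hθ : G.IsOneForm θ) :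
    ({ψ : G.D → ℂ | G.walkU w θ ψ = ψ ∧
        ∀ χ ∈ LinearMap.range (G.dAadj w) ⊔ LinearMap.range (G.dBadj w θ), G.innD χ ψ = 0}
      = ↑(LinearMap.ker (G.dA w) ⊓ LinearMap.ker (G.shiftS θ + LinearMap.id))) ∧
    ((Module.finrank ℂ
        ↥(LinearMap.ker (G.dA w) ⊓ LinearMap.ker (G.shiftS θ + LinearMap.id)) : ℤ)
      = max 0 ((Fintype.card G.D : ℤ) / 2 - (Fintype.card G.V : ℤ)
          + (Module.finrank ℂ ↥(LinearMap.ker (G.discT w θ - LinearMap.id)) : ℤ))) ∧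
    ({ψ : G.D → ℂ | G.walkU w θ ψ = -ψ ∧
        ∀ χ ∈ LinearMap.range (G.dAadj w) ⊔ LinearMap.range (G.dBadj w θ), G.innD χ ψ = 0}
      = ↑(LinearMap.ker (G.dA w) ⊓ LinearMap.ker (G.shiftS θ - LinearMap.id))) ∧
    ((Module.finrank ℂ
        ↥(LinearMap.ker (G.dA w) ⊓ LinearMap.ker (G.shiftS θ - LinearMap.id)) : ℤ)
      = max 0 ((Fintype.card G.D : ℤ) / 2 - (Fintype.card G.V : ℤ)
          + (Module.finrank ℂ ↥(LinearMap.ker (G.discT w θ + LinearMap.id)) : ℤ))) := by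
  have hS_pos : G.shiftS θ + LinearMap.id = G.shiftS θ + (1 : ℂ) • LinearMap.id := by
    rw [one_smul]
  have hS_neg : G.shiftS θ - LinearMap.id = G.shiftS θ + (-1 : ℂ) • LinearMap.id := by
    ext; simp [sub_eq_add_neg]
  have hT_pos : G.discT w θ - LinearMap.id = G.discT w θ - (1 : ℂ) • LinearMap.id := by
    rw [one_smul]
  have hT_neg : G.discT w θ + LinearMap.id = G.discT w θ - (-1 : ℂ) • LinearMap.id := by
    ext; simp
  rw [hS_pos, hS_neg, hT_pos, hT_neg]
  refine ⟨?_, G.finrank_ker_dA_inf_eq hw hθ (by norm_num), ?_,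
    G.finrank_ker_dA_inf_eq hw hθ (by norm_num)⟩
  · simpa only [one_smul] using G.setOf_walkU_eq_smul_and_perp hθ 1
  · simpa only [neg_smul, one_smul] using G.setOf_walkU_eq_smul_and_perp hθ (-1)

/-- For a connected finite symmetric digraph, with `L = ran d_A* + ran d_B*`,
`|E| = |D|/2`, `m₁ = dim ker(T − I)`, `m₋₁ = dim ker(T + I)`:
`{ψ : Uψ = ψ, ψ ⟂ L} = ker d_A ∩ ker(S + I)` of dimension `max(0, |E| − |V| + m₁)`, and
`{ψ : Uψ = −ψ, ψ ⟂ L} = ker d_A ∩ ker(S − I)` of dimension `max(0, |E| − |V| + m₋₁)`. -/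
theorem birth_eigenspaces (G : SymDigraph) (hG : G.Connected) (w : G.D → ℂ) (θ : G.D → ℝ)
    (hw : G.IsWeight w) (hθ : G.IsOneForm θ) :
    ({ψ : G.D → ℂ | G.walkU w θ ψ = ψ ∧
        ∀ χ ∈ LinearMap.range (G.dAadj w) ⊔ LinearMap.range (G.dBadj w θ), G.innD χ ψ = 0}
      = ↑(LinearMap.ker (G.dA w) ⊓ LinearMap.ker (G.shiftS θ + LinearMap.id))) ∧
    ((Module.finrank ℂ
        ↥(LinearMap.ker (G.dA w) ⊓ LinearMap.ker (G.shiftS θ + LinearMap.id)) : ℤ)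
      = max 0 ((Fintype.card G.D : ℤ) / 2 - (Fintype.card G.V : ℤ)
          + (Module.finrank ℂ ↥(LinearMap.ker (G.discT w θ - LinearMap.id)) : ℤ))) ∧
    ({ψ : G.D → ℂ | G.walkU w θ ψ = -ψ ∧
        ∀ χ ∈ LinearMap.range (G.dAadj w) ⊔ LinearMap.range (G.dBadj w θ), G.innD χ ψ = 0}
      = ↑(LinearMap.ker (G.dA w) ⊓ LinearMap.ker (G.shiftS θ - LinearMap.id))) ∧
    ((Module.finrank ℂ
        ↥(LinearMap.ker (G.dA w) ⊓ LinearMap.ker (G.shiftS θ - LinearMap.id)) : ℤ)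
      = max 0 ((Fintype.card G.D : ℤ) / 2 - (Fintype.card G.V : ℤ)
          + (Module.finrank ℂ ↥(LinearMap.ker (G.discT w θ + LinearMap.id)) : ℤ))) :=
  birth_eigenspaces_general G w θ hw hθ
end

section
/- Let G=(V,D) be a finite connected symmetric digraph and let w be a weight on G. The following are equivalent: (i) the random walk with transition probabilities p(e) = |w(e)|² admits a reversible measure, i.e., there exists m : V → (0,∞) with m(o(e)) |w(e)|² = m(t(e)) |w(ē)|² for every arc e ∈ D; (ii) there exists a 1-form θ : D → ℝ (with θ(ē) = −θ(e)) such that 1 is an eigenvalue of the discriminant operator T^{(w,θ)} = d_A d_B*. -/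
open Finset

/-! If `m` is reversible, the phase `θ e = arg w(ē) - arg w(e)` makes every coefficient
`conj (w e) e^{-iθ(e)} w(ē)` of `T` equal to `|w e| |w ē|`, and reversibility, in the form
`|w ē| √m(t e) = |w e| √m(o e)`, turns `T √m` into `(∑ |w e|²) √m = √m`.

Conversely, if `T f = f`, then `d_A* f` and `d_B* f` both have norm `‖f‖` while
`⟪d_A* f, d_B* f⟫ = ⟪f, T f⟫ = ‖f‖²`, so `‖d_A* f - d_B* f‖² = 0`.
Taking absolute values gives `|w e| |f(o e)| = |w ē| |f(t e)|`; as `w` vanishes nowhere and `G`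
is connected, `f` vanishes nowhere, and `|f|²` is a reversible measure. -/

open ComplexConjugate

lemma Complex.exp_neg_arg_mul_I_mul_self (z : ℂ) :
    Complex.exp (-(z.arg : ℂ) * Complex.I) * z = ‖z‖ := by
  nth_rw 2 [← Complex.norm_mul_exp_arg_mul_I z]
  rw [mul_left_comm, ← Complex.exp_add, neg_mul, neg_add_cancel, Complex.exp_zero, mul_one]

lemma Complex.conj_mul_exp_arg_sub_mul (z z' : ℂ) :
    conj z * Complex.exp (-((z'.arg - z.arg : ℝ) : ℂ) * Complex.I) * z' = ‖z‖ * ‖z'‖ := by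
  have hz : conj z * Complex.exp (z.arg * Complex.I) = ‖z‖ := by
    rw [mul_comm]
    simpa [← Complex.exp_conj] using congrArg conj (Complex.exp_neg_arg_mul_I_mul_self z)
  rw [← hz, ← Complex.exp_neg_arg_mul_I_mul_self z']
  have hexp : Complex.exp (-((z'.arg - z.arg : ℝ) : ℂ) * Complex.I)
      = Complex.exp (z.arg * Complex.I) * Complex.exp (-(z'.arg : ℂ) * Complex.I) := by
    rw [← Complex.exp_add]; push_cast; ring_nf
  rw [hexp]
  ring

theorem eq_of_sum_norm_sq_eq_of_sum_conj_mul_eq {ι : Type*} [Fintype ι] {a b : ι → ℂ}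
    (hb : ∑ i, ‖b i‖ ^ 2 = ∑ i, ‖a i‖ ^ 2)
    (hab : ∑ i, conj (a i) * b i = ((∑ i, ‖a i‖ ^ 2 : ℝ) : ℂ)) : a = b := by
  have hinner : inner ℂ (WithLp.toLp 2 a) (WithLp.toLp 2 b) = ((∑ i, ‖a i‖ ^ 2 : ℝ) : ℂ) := by
    rw [EuclideanSpace.inner_toLp_toLp, ← hab, dotProduct]
    exact sum_congr rfl fun i _ => mul_comm _ _
  have hnorm : ‖WithLp.toLp 2 a - WithLp.toLp 2 b‖ ^ 2 = 0 := by
    rw [norm_sub_sq (𝕜 := ℂ), EuclideanSpace.norm_sq_eq, EuclideanSpace.norm_sq_eq, hinner]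
    simp only [hb, RCLike.re_to_complex, Complex.ofReal_re]
    ring
  simpa [sub_eq_zero] using hnorm

namespace SymDigraph

def IsReversibleMeasure (G : SymDigraph) (w : G.D → ℂ) (m : G.V → ℝ) : Prop :=
  (∀ v, 0 < m v) ∧ ∀ e, m (G.o e) * ‖w e‖ ^ 2 = m (G.t e) * ‖w (G.rev e)‖ ^ 2

variable {G : SymDigraph} {w : G.D → ℂ}

lemma t_rev (e : G.D) : G.t (G.rev e) = G.o e := by
  rw [← G.o_rev, G.rev_rev]

lemma sum_comp_rev {M : Type*} [AddCommMonoid M] (F : G.D → M) :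
    ∑ e, F (G.rev e) = ∑ e, F e :=
  (Function.Involutive.bijective G.rev_rev).sum_comp F

lemma Connected.forall_of_arc_closed (hG : G.Connected) {P : G.V → Prop}
    (hP : ∀ e, P (G.o e) → P (G.t e)) {u : G.V} (hu : P u) (v : G.V) : P v := by
  induction hG u v with
  | refl => exact hu
  | tail _ harc ih =>
    obtain ⟨e, rfl, rfl⟩ := harc
    exact hP e ih

lemma dAadj_apply (f : G.V → ℂ) (e : G.D) : G.dAadj w f e = w e * f (G.o e) := rfl

lemma dBadj_apply (θ : G.D → ℝ) (f : G.V → ℂ) (e : G.D) :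
    G.dBadj w θ f e = Complex.exp (-(θ e : ℂ) * Complex.I) * w (G.rev e) * f (G.t e) := rfl

lemma discT_apply (θ : G.D → ℝ) (f : G.V → ℂ) (v : G.V) :
    G.discT w θ f v = ∑ e ∈ univ.filter (G.o · = v), conj (w e) * G.dBadj w θ f e := rfl

lemma norm_dBadj_apply (θ : G.D → ℝ) (f : G.V → ℂ) (e : G.D) :
    ‖G.dBadj w θ f e‖ = ‖w (G.rev e)‖ * ‖f (G.t e)‖ := by
  rw [dBadj_apply, norm_mul, norm_mul, ← Complex.ofReal_neg, Complex.norm_exp_ofReal_mul_I,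
    one_mul]

lemma innD_dAadj (f : G.V → ℂ) (φ : G.D → ℂ) :
    G.innD (G.dAadj w f) φ = G.innV f (G.dA w φ) := by
  rw [innD, innV, ← sum_fiberwise univ G.o]
  refine sum_congr rfl fun v _ => ?_
  rw [show G.dA w φ v = ∑ e ∈ univ.filter (G.o · = v), conj (w e) * φ e from rfl, mul_sum]
  refine sum_congr rfl fun e he => ?_
  rw [dAadj_apply, (mem_filter.1 he).2, map_mul]
  ring

lemma IsWeight.sum_norm_sq_dAadj (hw : G.IsWeight w) (f : G.V → ℂ) :
    ∑ e, ‖G.dAadj w f e‖ ^ 2 = ∑ v, ‖f v‖ ^ 2 := by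
  rw [← sum_fiberwise univ G.o]
  refine sum_congr rfl fun v _ => ?_
  calc ∑ e ∈ univ.filter (G.o · = v), ‖G.dAadj w f e‖ ^ 2
      = ∑ e ∈ univ.filter (G.o · = v), ‖w e‖ ^ 2 * ‖f v‖ ^ 2 :=
        sum_congr rfl fun e he => by rw [dAadj_apply, (mem_filter.1 he).2, norm_mul, mul_pow]
    _ = ‖f v‖ ^ 2 := by rw [← sum_mul, hw.2 v, one_mul]

lemma IsWeight.sum_norm_sq_dBadj (hw : G.IsWeight w) (θ : G.D → ℝ) (f : G.V → ℂ) :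
    ∑ e, ‖G.dBadj w θ f e‖ ^ 2 = ∑ v, ‖f v‖ ^ 2 := by
  rw [← sum_comp_rev, ← hw.sum_norm_sq_dAadj f]
  refine sum_congr rfl fun e _ => ?_
  rw [norm_dBadj_apply, G.rev_rev, t_rev, dAadj_apply, norm_mul]

noncomputable def argForm (G : SymDigraph) (w : G.D → ℂ) (e : G.D) : ℝ :=
  (w (G.rev e)).arg - (w e).arg

lemma isOneForm_argForm (w : G.D → ℂ) : G.IsOneForm (G.argForm w) := fun e => by
  simp only [argForm, G.rev_rev]
  ring

lemma IsReversibleMeasure.discT_argForm_sqrt (hw : G.IsWeight w) {m : G.V → ℝ}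
    (hm : G.IsReversibleMeasure w m) :
    G.discT w (G.argForm w) (fun v => (√(m v) : ℂ)) = fun v => (√(m v) : ℂ) := by
  have hbalance : ∀ e, ‖w (G.rev e)‖ * √(m (G.t e)) = ‖w e‖ * √(m (G.o e)) := fun e => by
    have h := congrArg Real.sqrt (hm.2 e)
    rwa [Real.sqrt_mul (hm.1 _).le, Real.sqrt_mul (hm.1 _).le, Real.sqrt_sq (norm_nonneg _),
      Real.sqrt_sq (norm_nonneg _), mul_comm, eq_comm, mul_comm] at h
  funext v
  calc G.discT w (G.argForm w) (fun v => (√(m v) : ℂ)) v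
      = ∑ e ∈ univ.filter (G.o · = v), ((‖w e‖ ^ 2 : ℝ) : ℂ) * √(m v) := by
        rw [discT_apply]
        refine sum_congr rfl fun e he => ?_
        rw [dBadj_apply, ← mul_assoc, ← mul_assoc, argForm,
          Complex.conj_mul_exp_arg_sub_mul, mul_assoc, ← Complex.ofReal_mul, hbalance,
          (mem_filter.1 he).2]
        push_cast
        ring
    _ = √(m v) := by rw [← sum_mul, ← Complex.ofReal_sum, hw.2 v, Complex.ofReal_one, one_mul]

lemma IsWeight.dAadj_eq_dBadj_of_discT_eq_self (hw : G.IsWeight w) {θ : G.D → ℝ}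
    {f : G.V → ℂ} (hf : G.discT w θ f = f) : G.dAadj w f = G.dBadj w θ f := by
  refine eq_of_sum_norm_sq_eq_of_sum_conj_mul_eq ?_ ?_
  · rw [hw.sum_norm_sq_dBadj, hw.sum_norm_sq_dAadj]
  · calc ∑ e, conj (G.dAadj w f e) * G.dBadj w θ f e = G.innV f (G.discT w θ f) :=
          innD_dAadj f _
      _ = ((∑ e, ‖G.dAadj w f e‖ ^ 2 : ℝ) : ℂ) := by
        rw [hf, innV, hw.sum_norm_sq_dAadj, Complex.ofReal_sum]
        exact sum_congr rfl fun v _ => by rw [Complex.conj_mul', Complex.ofReal_pow]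

lemma isReversibleMeasure_of_dAadj_eq_dBadj (hG : G.Connected) (hw : G.IsWeight w)
    {θ : G.D → ℝ} {f : G.V → ℂ} (hf : f ≠ 0) (h : G.dAadj w f = G.dBadj w θ f) :
    G.IsReversibleMeasure w (fun v => ‖f v‖ ^ 2) := by
  have harc : ∀ e, ‖w e‖ * ‖f (G.o e)‖ = ‖w (G.rev e)‖ * ‖f (G.t e)‖ := fun e => by
    rw [← norm_mul, ← dAadj_apply, h, norm_dBadj_apply]
  obtain ⟨u, hu⟩ := Function.ne_iff.mp hf
  have hne : ∀ v, f v ≠ 0 := by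
    refine hG.forall_of_arc_closed (fun e he ht => ?_) hu
    have h0 := harc e
    rw [ht, norm_zero, mul_zero] at h0
    exact mul_ne_zero (norm_ne_zero_iff.2 (hw.1 e)) (norm_ne_zero_iff.2 he) h0
  refine ⟨fun v => pow_pos (norm_pos_iff.2 (hne v)) 2, fun e => ?_⟩
  linear_combination (‖w e‖ * ‖f (G.o e)‖ + ‖w (G.rev e)‖ * ‖f (G.t e)‖) * harc e

end SymDigraph

/-- For a connected finite symmetric digraph with weight `w`, the random walk
with transition probabilities `p(e) = |w(e)|²` admits a reversible measure iff there exists a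
1-form `θ` such that `1` is an eigenvalue of the discriminant `T^{(w,θ)} = d_A d_B*`. -/
theorem reversible_iff_one_eigenvalue (G : SymDigraph) (hG : G.Connected)
    (w : G.D → ℂ) (hw : G.IsWeight w) :
    (∃ m : G.V → ℝ, (∀ v, 0 < m v) ∧
        ∀ e : G.D, m (G.o e) * ‖w e‖ ^ 2
          = m (G.t e) * ‖w (G.rev e)‖ ^ 2) ↔
    (∃ θ : G.D → ℝ, G.IsOneForm θ ∧ ∃ f : G.V → ℂ, f ≠ 0 ∧ G.discT w θ f = f) := by
  constructor
  · rintro ⟨m, hm⟩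
    obtain ⟨v⟩ := G.nonemptyV
    refine ⟨G.argForm w, SymDigraph.isOneForm_argForm w, _, ?_,
      SymDigraph.IsReversibleMeasure.discT_argForm_sqrt hw hm⟩
    exact Function.ne_iff.mpr ⟨v, by simpa using Real.sqrt_ne_zero'.2 (hm.1 v)⟩
  · rintro ⟨θ, -, f, hf, hTf⟩
    exact ⟨_, SymDigraph.isReversibleMeasure_of_dAadj_eq_dBadj hG hw hf
      (hw.dAadj_eq_dBadj_of_discT_eq_self hTf)⟩
end
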